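/- arXiv:2209.04012 — 7 statements merged into one kernel-verified Lean document; each statement's English description precedes it below -/
import Mathlib

section
/- For all integers n, m ≥ 0, ∑_{k=0}^{n} ∑_{l=0}^{m} binom(n,k) · binom(m,l) · ((n−k)!·(m−l)!/(n+m−k−l+1)!) · (−1)^l · B_{k+l} equals 1 if n = 0 and equals 0 if n ≥ 1. -/
/-!
Write `β(a, c) = a! c! / (a + c + 1)! = ∫₀¹ xᵃ (1 - x)ᶜ dx` (`natBeta`). Umbrally (`Bᵏ ↦ B_k`)
the double sum is `S(n, m) = ∫₀¹ (x + B)ⁿ (1 - x - B)ᵐ dx` (`binomialBetaSum bernoulli n m`),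
and splitting `1 - x - B = 1 - (x + B)` once gives `S(n, m + 1) = S(n, m) - S(n + 1, m)`.
Without the umbra this is Pascal's rule in both indices together with
`β(a, c + 1) = β(a, c) - β(a + 1, c)`. Since `S(n, 0) = ∫₀¹ Bₙ(x) dx` is `1` for `n = 0` and
vanishes otherwise, induction on `m`, for all `n` at once, gives `S(n, m) = S(n, 0)`.
-/

open Finset Nat

def natBeta (a c : ℕ) : ℚ := (a ! * c ! : ℚ) / (a + c + 1)!

lemma natBeta_succ_right (a c : ℕ) : natBeta a (c + 1) = natBeta a c - natBeta (a + 1) c := by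
  simp only [natBeta, show a + (c + 1) + 1 = a + c + 1 + 1 by omega,
    show a + 1 + c + 1 = a + c + 1 + 1 by omega, factorial_succ]
  push_cast
  field_simp
  ring

def binomialBetaSum (b : ℕ → ℚ) (n m : ℕ) : ℚ :=
  ∑ p ∈ antidiagonal n, ∑ q ∈ antidiagonal m,
    n.choose p.1 * m.choose q.1 * natBeta p.2 q.2 * (-1) ^ q.1 * b (p.1 + q.1)

lemma binomialBetaSum_zero_right (b : ℕ → ℚ) (n : ℕ) :
    binomialBetaSum b n 0 = ∑ p ∈ antidiagonal n, n.choose p.1 * b p.1 / (p.2 + 1) := by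
  refine sum_congr rfl fun p _ => ?_
  simp only [HasAntidiagonal.antidiagonal_zero, sum_singleton, natBeta, factorial_succ,
    factorial_zero, choose_self, cast_mul, cast_add, cast_one, CharP.cast_eq_zero, add_zero,
    pow_zero, mul_one]
  field_simp

lemma binomialBetaSum_succ_right (b : ℕ → ℚ) (n m : ℕ) :
    binomialBetaSum b n (m + 1) = binomialBetaSum b n m - binomialBetaSum b (n + 1) m := by
  have pascal_m (p : ℕ × ℕ) := sum_antidiagonal_choose_succ_mul
    (fun l c => (n.choose p.1 : ℚ) * natBeta p.2 c * (-1) ^ l * b (p.1 + l)) m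
  have pascal_n (q : ℕ × ℕ) := sum_antidiagonal_choose_succ_mul
    (fun k a => (m.choose q.1 : ℚ) * natBeta a q.2 * (-1) ^ q.1 * b (k + q.1)) n
  have lhs : binomialBetaSum b n (m + 1) = ∑ p ∈ antidiagonal n, ∑ q ∈ antidiagonal (m + 1),
      ((m + 1).choose q.1 : ℚ) * (n.choose p.1 * natBeta p.2 q.2 * (-1) ^ q.1 * b (p.1 + q.1)) :=
    sum_congr rfl fun p _ => sum_congr rfl fun q _ => by ring
  have rhs : binomialBetaSum b (n + 1) m = ∑ q ∈ antidiagonal m, ∑ p ∈ antidiagonal (n + 1),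
      ((n + 1).choose p.1 : ℚ) * (m.choose q.1 * natBeta p.2 q.2 * (-1) ^ q.1 * b (p.1 + q.1)) := by
    rw [binomialBetaSum, sum_comm]
    exact sum_congr rfl fun q _ => sum_congr rfl fun p _ => by ring
  rw [lhs, rhs]
  simp only [pascal_m, pascal_n, sum_add_distrib]
  rw [sum_comm (s := antidiagonal m) (t := antidiagonal n), binomialBetaSum,
    sum_comm (s := antidiagonal m) (t := antidiagonal n)]
  simp only [← sum_add_distrib, ← sum_sub_distrib]
  refine sum_congr rfl fun p hp => sum_congr rfl fun q hq => ?_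
  rw [HasAntidiagonal.mem_antidiagonal] at hp hq
  rw [← choose_symm_of_eq_add hp.symm, ← choose_symm_of_eq_add hq.symm, natBeta_succ_right,
    add_right_comm p.1, ← add_assoc]
  ring

lemma sum_antidiagonal_choose_mul_bernoulli_div (n : ℕ) :
    ∑ p ∈ antidiagonal n, (n.choose p.1 : ℚ) * bernoulli p.1 / (p.2 + 1) =
      if n = 0 then 1 else 0 := by
  have hterm (p : ℕ × ℕ) (hp : p ∈ antidiagonal n) :
      (n.choose p.1 : ℚ) * bernoulli p.1 / (p.2 + 1) =
        (n + 1).choose p.1 * bernoulli p.1 / (n + 1) := by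
    rw [HasAntidiagonal.mem_antidiagonal] at hp
    have h := choose_mul_succ_eq n p.1
    rw [show n + 1 - p.1 = p.2 + 1 by omega] at h
    have h' : (n.choose p.1 : ℚ) * (n + 1) = (n + 1).choose p.1 * (p.2 + 1) := by exact_mod_cast h
    rw [div_eq_div_iff (by positivity) (by positivity)]
    linear_combination bernoulli p.1 * h'
  rw [sum_congr rfl hterm, ← sum_div, sum_antidiagonal_eq_sum_range_succ_mk]
  simp only [succ_eq_add_one, sum_bernoulli, add_eq_right]
  split_ifs with hn <;> simp [hn]

lemma binomialBetaSum_bernoulli (n m : ℕ) :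
    binomialBetaSum bernoulli n m = if n = 0 then 1 else 0 := by
  induction m generalizing n with
  | zero => rw [binomialBetaSum_zero_right, sum_antidiagonal_choose_mul_bernoulli_div]
  | succ m ih => simp [binomialBetaSum_succ_right, ih]

/-- For all integers `n, m ≥ 0`,
`∑_{k=0}^{n} ∑_{l=0}^{m} binom(n,k)·binom(m,l)·((n-k)!·(m-l)!/(n+m-k-l+1)!)·(-1)^l·B_{k+l}`
equals `1` if `n = 0` and `0` if `n ≥ 1`.  Here `B` are the Bernoulli numbers with
`B₁ = -1/2`. -/
theorem bernoulli_double_sum (n m : ℕ) :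
    ∑ k ∈ Finset.range (n + 1), ∑ l ∈ Finset.range (m + 1),
      (n.choose k : ℚ) * (m.choose l : ℚ) *
        ((((n - k).factorial * (m - l).factorial : ℕ) : ℚ) /
          (((n + m - k - l + 1).factorial : ℕ) : ℚ)) *
        (-1 : ℚ) ^ l * bernoulli (k + l) =
      if n = 0 then 1 else 0 := by
  rw [← binomialBetaSum_bernoulli n m, binomialBetaSum, sum_antidiagonal_eq_sum_range_succ_mk]
  refine sum_congr rfl fun k hk => ?_
  rw [sum_antidiagonal_eq_sum_range_succ_mk]
  refine sum_congr rfl fun l hl => ?_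
  rw [mem_range] at hk hl
  rw [natBeta, show n + m - k - l + 1 = n - k + (m - l) + 1 by omega]
  push_cast
  ring
end

section
/- Let a : ℕ → ℚ be any sequence and let b : ℕ → ℚ be its binomial transform, b_n = ∑_{k=0}^{n} binom(n,k) · a_k. Then for all integers n, m ≥ 0, ∑_{k=0}^{m} binom(m,k) · a_{n+k+1}/(n+k+1) = ∑_{k=0}^{n} (−1)^{n−k} · binom(n,k) · b_{m+k+1}/(m+k+1) + (−1)^{n+1} · a_0/((m+n+1) · binom(m+n,n)). -/
/-!
Write `T` for the binomial transform and `Δ` for the forward difference in `m`. Pascal's rule gives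
`Δ (T c) = T (c ∘ (· + 1))`, and absorption `(k + 1) C(m + 1, k + 1) = (m + 1) C(m, k)` gives
`b (m + 1) / (m + 1) = T c m + a 0 / (m + 1)` with `c k = a (k + 1) / (k + 1)`. Apply `Δⁿ` at `m`:
on the left it is the alternating sum, `Δⁿ (T c) m` is the left-hand side of the identity, and
`Δⁿ (m ↦ 1 / (m + 1)) = (-1)ⁿ m! n! / (m + n + 1)!` is the correction term.
-/

open Finset fwdDiff

def binomialTransform {G : Type*} [AddCommMonoid G] (c : ℕ → G) (n : ℕ) : G :=
  ∑ k ∈ range (n + 1), n.choose k • c k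

section AddCommGroup

variable {G : Type*} [AddCommGroup G]

theorem fwdDiff_binomialTransform (c : ℕ → G) :
    Δ_[1] (binomialTransform c) = binomialTransform fun k ↦ c (k + 1) := by
  ext m
  simp only [fwdDiff, binomialTransform, sum_choose_succ_nsmul (fun i _ ↦ c i) m,
    add_sub_cancel_left]

theorem fwdDiff_iter_binomialTransform (c : ℕ → G) (n : ℕ) :
    (Δ_[1])^[n] (binomialTransform c) = binomialTransform fun k ↦ c (n + k) := by
  induction n with
  | zero => simp only [Function.iterate_zero, id_eq, zero_add]
  | succ n ih =>
    rw [Function.iterate_succ_apply', ih, fwdDiff_binomialTransform]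
    simp only [add_assoc, add_comm 1]

end AddCommGroup

section Field

variable {K : Type*} [Field K] [CharZero K]

theorem binomialTransform_succ_div (a : ℕ → K) (m : ℕ) :
    binomialTransform a (m + 1) / (m + 1) =
      binomialTransform (fun k ↦ a (k + 1) / (k + 1)) m + a 0 / (m + 1) := by
  have hm : (m : K) + 1 ≠ 0 := Nat.cast_add_one_ne_zero m
  have absorb (k : ℕ) : ((m + 1).choose (k + 1) : K) / (m + 1) = m.choose k / (k + 1) := by
    rw [div_eq_div_iff hm (Nat.cast_add_one_ne_zero k), mul_comm (m.choose k : K)]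
    exact_mod_cast (Nat.add_one_mul_choose_eq m k).symm
  simp only [binomialTransform, sum_range_succ' _ (m + 1), nsmul_eq_mul, add_div, sum_div]
  congr 1
  · refine sum_congr rfl fun k _ ↦ ?_
    rw [mul_div_right_comm, absorb]
    ring
  · simp

theorem fwdDiff_iter_inv_add_one (n m : ℕ) :
    (Δ_[1])^[n] (fun m : ℕ ↦ ((m : K) + 1)⁻¹) m =
      (-1) ^ n * (m.factorial * n.factorial / (m + n + 1).factorial) := by
  induction n generalizing m with
  | zero =>
    have : (m.factorial : K) ≠ 0 := Nat.cast_ne_zero.mpr (Nat.factorial_ne_zero _)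
    simp [Nat.factorial_succ, div_mul_cancel_right₀ this]
  | succ n ih =>
    rw [Function.iterate_succ_apply', fwdDiff, ih, ih, show m + 1 + n + 1 = m + n + 1 + 1 by ring,
      show m + (n + 1) + 1 = m + n + 1 + 1 by ring, Nat.factorial_succ m, Nat.factorial_succ n,
      Nat.factorial_succ (m + n + 1)]
    have : ((m + n + 1).factorial : K) ≠ 0 := Nat.cast_ne_zero.mpr (Nat.factorial_ne_zero _)
    have : (m : K) + n + 1 + 1 ≠ 0 := by exact_mod_cast Nat.succ_ne_zero (m + n + 1)
    push_cast
    field_simp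
    ring

theorem inv_add_one_mul_choose (m n : ℕ) :
    (((m : K) + n + 1) * (m + n).choose n)⁻¹ =
      m.factorial * n.factorial / (m + n + 1).factorial := by
  have : (m.factorial : K) ≠ 0 := Nat.cast_ne_zero.mpr (Nat.factorial_ne_zero _)
  have : (n.factorial : K) ≠ 0 := Nat.cast_ne_zero.mpr (Nat.factorial_ne_zero _)
  rw [Nat.factorial_succ, ← Nat.add_choose_mul_factorial_mul_factorial m n]
  push_cast
  field_simp

end Field

/-- Let `a : ℕ → ℚ` be any sequence and `b` its binomial transform,
`b n = ∑_{k=0}^{n} binom(n,k) · a k`.  Then for all `n, m ≥ 0`,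
`∑_{k=0}^{m} binom(m,k) · a_{n+k+1}/(n+k+1)
  = ∑_{k=0}^{n} (-1)^{n-k} · binom(n,k) · b_{m+k+1}/(m+k+1)
    + (-1)^{n+1} · a₀ / ((m+n+1) · binom(m+n,n))`. -/
theorem binomial_transform_identity (a b : ℕ → ℚ)
    (hb : ∀ n, b n = ∑ k ∈ Finset.range (n + 1), (n.choose k : ℚ) * a k) (n m : ℕ) :
    ∑ k ∈ Finset.range (m + 1), (m.choose k : ℚ) * a (n + k + 1) / ((n : ℚ) + k + 1) =
      (∑ k ∈ Finset.range (n + 1),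
        (-1 : ℚ) ^ (n - k) * (n.choose k : ℚ) * b (m + k + 1) / ((m : ℚ) + k + 1)) +
      (-1 : ℚ) ^ (n + 1) * a 0 / (((m : ℚ) + n + 1) * ((m + n).choose n : ℚ)) := by
  obtain rfl : b = binomialTransform a := funext fun n ↦ by simp [hb, binomialTransform]
  have hd : (fun m : ℕ ↦ binomialTransform a (m + 1) / (m + 1)) =
      binomialTransform (fun k ↦ a (k + 1) / (k + 1)) + a 0 • fun m : ℕ ↦ ((m : ℚ) + 1)⁻¹ := by
    ext m
    rw [Pi.add_apply, Pi.smul_apply, smul_eq_mul, ← div_eq_mul_inv]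
    exact binomialTransform_succ_div a m
  have key := congrFun (congrArg (Δ_[1])^[n] hd) m
  rw [fwdDiff_iter_add, Pi.add_apply, fwdDiff_iter_const_smul, fwdDiff_iter_binomialTransform,
    fwdDiff_iter_eq_sum_shift, Pi.smul_apply, fwdDiff_iter_inv_add_one,
    ← inv_add_one_mul_choose] at key
  simp only [binomialTransform, zsmul_eq_mul, nsmul_eq_mul, smul_eq_mul, mul_one, Int.cast_mul,
    Int.cast_pow, Int.cast_neg, Int.cast_one, Int.cast_natCast, Nat.cast_add, mul_div_assoc]
    at key ⊢
  linear_combination -key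
end

section
/- Efficiency of n-Shapley Values: for every value function v, every x ∈ ℝ^d and every n with 1 ≤ n ≤ d, ∑_{S ⊆ [d], 1 ≤ |S| ≤ n} Φ^n_S(x) = v(x,[d]) − v(x,∅). -/
open Finset

/-- The measure of contribution `Δ_S(x)` associated with a value function `v` on
`d` features: `Δ_S(x) = ∑_{T ⊆ [d]∖S} ((d-|T|-|S|)!·|T|!/(d-|S|+1)!) ·
∑_{L ⊆ S} (-1)^{|S|-|L|} · v(x, L ∪ T)`. -/
noncomputable def deltaContribution (d : ℕ) (v : (Fin d → ℝ) → Finset (Fin d) → ℝ)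
    (x : Fin d → ℝ) (S : Finset (Fin d)) : ℝ :=
  ∑ T ∈ Sᶜ.powerset,
    (((d - T.card - S.card).factorial * T.card.factorial : ℕ) : ℝ) /
        (((d - S.card + 1).factorial : ℕ) : ℝ) *
      ∑ L ∈ S.powerset, (-1 : ℝ) ^ (S.card - L.card) * v x (L ∪ T)

/-- The `n`-Shapley Value of a subset `S` at a point `x`, for a value function `v`:
`Φ^n_S(x) = ∑_{k=0}^{n-|S|} ∑_{K ⊆ [d]∖S, |K| = k} B_k · Δ_{S∪K}(x)`, where `B_k`
are the Bernoulli numbers with `B₁ = -1/2`. -/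
noncomputable def nShapley (d : ℕ) (v : (Fin d → ℝ) → Finset (Fin d) → ℝ)
    (n : ℕ) (x : Fin d → ℝ) (S : Finset (Fin d)) : ℝ :=
  ∑ k ∈ Finset.range (n - S.card + 1),
    ∑ K ∈ Sᶜ.powerset.filter (fun K => K.card = k),
      (bernoulli k : ℝ) * deltaContribution d v x (S ∪ K)

/-!
Write `A = S ∪ K`. Summing `Φ^n_S` over `S` regroups the double sum as
`∑_{1 ≤ |A| ≤ n} Δ_A · ∑_{∅ ≠ S ⊆ A} B_{|A∖S|}`, and the inner sum is
`∑_{k < |A|} C(|A|, k) B_k`, which is `1` when `|A| = 1` and `0` otherwise. So the left-hand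
side is `∑_i Δ_{{i}}`, and `Δ_{{i}}` is the classical Shapley value of feature `i`. Its efficiency
follows by collecting the coefficient of each `v(x, U)`: the contributions of `U` as `T ∪ {i}`
and as `T` cancel, except at `U = [d]` and `U = ∅`.
-/

open scoped Nat

section Bernoulli

variable {α : Type*} [DecidableEq α]

lemma sum_powerset_bernoulli_card_sdiff (A : Finset α) :
    ∑ S ∈ A.powerset, (bernoulli #(A \ S) : ℝ) = (if #A = 1 then 1 else 0) + bernoulli #A := by
  have hcompl : ∑ S ∈ A.powerset, (bernoulli #(A \ S) : ℝ) = ∑ K ∈ A.powerset, (bernoulli #K : ℝ) :=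
    sum_nbij' (A \ ·) (A \ ·) (by simp) (by simp)
      (fun S hS => Finset.sdiff_sdiff_eq_self (mem_powerset.mp hS))
      (fun S hS => Finset.sdiff_sdiff_eq_self (mem_powerset.mp hS)) (fun _ _ => rfl)
  have hsum : ∑ k ∈ range #A, ((#A).choose k : ℝ) * bernoulli k = if #A = 1 then 1 else 0 := by
    have h := congrArg ((↑) : ℚ → ℝ) (sum_bernoulli #A)
    push_cast [apply_ite ((↑) : ℚ → ℝ)] at h
    exact h
  rw [hcompl, sum_powerset_apply_card (fun k => (bernoulli k : ℝ)), sum_range_succ]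
  simp only [nsmul_eq_mul, Nat.choose_self, Nat.cast_one, one_mul, hsum]

lemma sum_powerset_erase_empty_bernoulli_card_sdiff (A : Finset α) :
    ∑ S ∈ A.powerset.erase ∅, (bernoulli #(A \ S) : ℝ) = if #A = 1 then 1 else 0 := by
  rw [sum_erase_eq_sub (empty_mem_powerset A), sum_powerset_bernoulli_card_sdiff, sdiff_empty,
    add_sub_cancel_right]

end Bernoulli

section Shapley

variable {ι : Type*} [Fintype ι] [DecidableEq ι]

lemma sum_sum_superset_bernoulli_mul_eq_sum_singleton {n : ℕ} (hn : 1 ≤ n) (Δ : Finset ι → ℝ) :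
    ∑ S with 1 ≤ #S ∧ #S ≤ n, ∑ A with S ⊆ A ∧ #A ≤ n, (bernoulli #(A \ S) : ℝ) * Δ A
      = ∑ i, Δ {i} := by
  rw [sum_comm' (t' := {A | #A ≤ n}) (s' := fun A => A.powerset.erase ∅) fun S A => by
    simp only [mem_filter, mem_univ, true_and, mem_erase, mem_powerset, ne_eq,
      ← nonempty_iff_ne_empty, ← one_le_card]
    exact ⟨fun ⟨⟨hS, _⟩, hSA, hA⟩ => ⟨⟨hS, hSA⟩, hA⟩,
      fun ⟨⟨hS, hSA⟩, hA⟩ => ⟨⟨hS, (card_le_card hSA).trans hA⟩, hSA, hA⟩⟩]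
  simp_rw [← sum_mul, sum_powerset_erase_empty_bernoulli_card_sdiff, ite_mul, one_mul, zero_mul,
    sum_ite, sum_const_zero, add_zero, filter_filter]
  have hsingletons : ({A | #A ≤ n ∧ #A = 1} : Finset (Finset ι)) = univ.powersetCard 1 := by
    ext A
    simp only [mem_filter, mem_univ, true_and, mem_powersetCard_univ]
    omega
  rw [hsingletons, powersetCard_one, sum_map]
  rfl

noncomputable def shapleyWeight (d t : ℕ) : ℝ := (d - t - 1)! * t ! / d !

noncomputable def shapleyValue (f : Finset ι → ℝ) (i : ι) : ℝ :=
  ∑ T ∈ ({i}ᶜ : Finset ι).powerset, shapleyWeight (Fintype.card ι) #T * (f (insert i T) - f T)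

lemma sum_sum_powerset_compl_singleton (g : Finset ι → ℝ) :
    ∑ i, ∑ T ∈ ({i}ᶜ : Finset ι).powerset, g T = ∑ T, #Tᶜ • g T := by
  rw [sum_comm' (t' := univ) (s' := fun T => Tᶜ) (by simp)]
  simp

lemma sum_sum_powerset_compl_singleton_insert (g : Finset ι → ℝ) :
    ∑ i, ∑ T ∈ ({i}ᶜ : Finset ι).powerset, g (insert i T) = ∑ U, #U • g U := by
  have hinsert : ∀ i, ∑ T ∈ ({i}ᶜ : Finset ι).powerset, g (insert i T) = ∑ U with i ∈ U, g U :=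
    fun i => sum_nbij' (insert i) (·.erase i) (by simp) (by simp)
      (fun T hT => erase_insert (by simpa using hT)) (fun U hU => insert_erase (by simpa using hU))
      (fun _ _ => rfl)
  simp_rw [hinsert]
  rw [sum_comm' (t' := univ) (s' := id) (by simp)]
  simp

lemma natCast_mul_shapleyWeight_pred_sub {d k : ℕ} (hk : k ≤ d) :
    (k * shapleyWeight d (k - 1) - (d - k : ℕ) * shapleyWeight d k : ℝ)
      = (if k = d then 1 else 0) - (if k = 0 then 1 else 0) := by
  have hpred : 0 < k → k * shapleyWeight d (k - 1) = (d - k)! * k ! / d ! := fun hk0 => by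
    rw [shapleyWeight, show d - (k - 1) - 1 = d - k by omega, ← Nat.mul_factorial_pred hk0.ne']
    push_cast
    ring
  have hsucc : k < d → ((d - k : ℕ) : ℝ) * shapleyWeight d k = (d - k)! * k ! / d ! := fun hkd => by
    rw [shapleyWeight, ← Nat.mul_factorial_pred (Nat.sub_ne_zero_of_lt hkd), Nat.sub_sub]
    push_cast
    ring
  rcases Nat.eq_zero_or_pos k with rfl | hk0
  · rcases Nat.eq_zero_or_pos d with rfl | hd
    · simp
    · rw [hsucc hd]
      simp [hd.ne, Nat.factorial_ne_zero]
  · rcases hk.lt_or_eq with hkd | rfl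
    · rw [hpred hk0, hsucc hkd]
      simp [hkd.ne, hk0.ne']
    · rw [hpred hk0]
      simp [hk0.ne', Nat.factorial_ne_zero]

theorem sum_shapleyValue (f : Finset ι → ℝ) : ∑ i, shapleyValue f i = f univ - f ∅ := by
  set d := Fintype.card ι
  have hcard : ∀ i, ∀ T ∈ ({i}ᶜ : Finset ι).powerset,
      shapleyWeight d #T * f (insert i T) = shapleyWeight d (#(insert i T) - 1) * f (insert i T) :=
    fun i T hT => by rw [card_insert_of_notMem (by simpa using hT), Nat.add_sub_cancel]
  have hcoeff : ∀ U : Finset ι,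
      #U • (shapleyWeight d (#U - 1) * f U) - #Uᶜ • (shapleyWeight d #U * f U)
        = ((if U = univ then 1 else 0) - (if U = ∅ then 1 else 0)) * f U := fun U => by
    rw [nsmul_eq_mul, nsmul_eq_mul, card_compl, ← mul_assoc, ← mul_assoc, ← sub_mul,
      natCast_mul_shapleyWeight_pred_sub (card_le_univ U)]
    simp only [card_eq_iff_eq_univ, card_eq_zero]
  simp_rw [shapleyValue, mul_sub, sum_sub_distrib]
  rw [sum_congr rfl fun i _ => sum_congr rfl (hcard i),
    sum_sum_powerset_compl_singleton_insert (fun U => shapleyWeight d (#U - 1) * f U),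
    sum_sum_powerset_compl_singleton, ← sum_sub_distrib, sum_congr rfl fun U _ => hcoeff U]
  simp [sub_mul, sum_sub_distrib]

end Shapley

section nShapley

variable {d : ℕ} (v : (Fin d → ℝ) → Finset (Fin d) → ℝ) (x : Fin d → ℝ)

lemma deltaContribution_singleton (i : Fin d) :
    deltaContribution d v x {i} = shapleyValue (v x) i := by
  have hd : d - 1 + 1 = d := Nat.sub_add_cancel i.pos
  refine sum_congr rfl fun T _ => ?_
  rw [← insert_empty (a := i), sum_powerset_insert (notMem_empty i)]
  simp [shapleyWeight, hd, neg_add_eq_sub]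

lemma nShapley_eq_sum_superset {n : ℕ} {S : Finset (Fin d)} (hS : #S ≤ n) :
    nShapley d v n x S
      = ∑ A with S ⊆ A ∧ #A ≤ n, (bernoulli #(A \ S) : ℝ) * deltaContribution d v x A := by
  have hsdiff : ∀ K ⊆ Sᶜ, (S ∪ K) \ S = K := fun K hK =>
    union_sdiff_cancel_left (subset_compl_iff_disjoint_right.1 hK).symm
  calc nShapley d v n x S
      = ∑ k ∈ range (n - #S + 1), ∑ K ∈ Sᶜ.powerset with #K = k,
          (bernoulli #K : ℝ) * deltaContribution d v x (S ∪ K) :=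
        sum_congr rfl fun k _ => sum_congr rfl fun K hK => by rw [(mem_filter.1 hK).2]
    _ = ∑ K ∈ Sᶜ.powerset with #K ∈ range (n - #S + 1),
          (bernoulli #K : ℝ) * deltaContribution d v x (S ∪ K) :=
        sum_fiberwise_eq_sum_filter _ _ _ _
    _ = _ := by
      refine sum_nbij' (S ∪ ·) (· \ S) (fun K hK => ?_) (fun A hA => ?_)
        (fun K hK => hsdiff K (mem_powerset.1 (mem_filter.1 hK).1))
        (fun A hA => union_sdiff_of_subset (mem_filter.1 hA).2.1)
        (fun K hK => by rw [hsdiff K (mem_powerset.1 (mem_filter.1 hK).1)])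
      · simp only [mem_filter, mem_powerset, mem_range, mem_univ, true_and] at hK ⊢
        rw [card_union_of_disjoint (subset_compl_iff_disjoint_right.1 hK.1).symm]
        exact ⟨subset_union_left, by omega⟩
      · simp only [mem_filter, mem_powerset, mem_range, mem_univ, true_and] at hA ⊢
        rw [card_sdiff_of_subset hA.1]
        exact ⟨fun a ha => by simpa using (mem_sdiff.1 ha).2, by omega⟩

end nShapley

theorem nShapley_efficiency_general (d : ℕ)
    (v : (Fin d → ℝ) → Finset (Fin d) → ℝ) (x : Fin d → ℝ)
    (n : ℕ) (hn : 1 ≤ n) :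
    ∑ S ∈ Finset.univ.filter (fun S : Finset (Fin d) => 1 ≤ S.card ∧ S.card ≤ n),
        nShapley d v n x S =
      v x Finset.univ - v x ∅ := by
  rw [sum_congr rfl fun S hS => nShapley_eq_sum_superset v x (mem_filter.1 hS).2.2,
    sum_sum_superset_bernoulli_mul_eq_sum_singleton hn]
  simp_rw [deltaContribution_singleton]
  exact sum_shapleyValue (v x)

/-- Efficiency of `n`-Shapley Values: for every value function `v`, point `x` and
`1 ≤ n ≤ d`, `∑_{S ⊆ [d], 1 ≤ |S| ≤ n} Φ^n_S(x) = v(x,[d]) - v(x,∅)`. -/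
theorem nShapley_efficiency (d : ℕ) (hd : 1 ≤ d)
    (v : (Fin d → ℝ) → Finset (Fin d) → ℝ) (x : Fin d → ℝ)
    (n : ℕ) (hn : 1 ≤ n) (hnd : n ≤ d) :
    ∑ S ∈ Finset.univ.filter (fun S : Finset (Fin d) => 1 ≤ S.card ∧ S.card ≤ n),
        nShapley d v n x S =
      v x Finset.univ - v x ∅ :=
  nShapley_efficiency_general d v x n hn
end

section
/- The d-Shapley Values are the Möbius transform of the value function: for every value function v, every x ∈ ℝ^d and every nonempty S ⊆ [d], Φ^d_S(x) = ∑_{L ⊆ S} (−1)^{|S|−|L|} · v(x, L). -/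
/-!
Let `m` be the Möbius transform of `v x`, so that `v x T = ∑_{A ⊆ T} m A`. Substituting this into
`Δ_S` and collecting, for each `A ⊆ Sᶜ`, the Shapley weights of all `T` between `A` and `Sᶜ`
(a hockey-stick sum) gives `Δ_S = ∑_{A ⊆ Sᶜ} m (S ∪ A) / (|A| + 1)`. In `Φ^d_S` the term
`m (S ∪ D)` then carries the coefficient `∑_{K ⊆ D} B_{|K|} / (|D ∖ K| + 1)`, which vanishes
unless `D = ∅` by the defining recurrence of the Bernoulli numbers.
-/

open Finset

open scoped Nat

section Powerset

variable {α M : Type*} [DecidableEq α] [AddCommMonoid M]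

theorem sum_Icc_eq_sum_powerset_sdiff {s t : Finset α} (h : s ⊆ t) (f : Finset α → M) :
    ∑ u ∈ Icc s t, f u = ∑ c ∈ (t \ s).powerset, f (s ∪ c) := by
  rw [Icc_eq_image_powerset h, sum_image]
  intro c hc c' hc' hcc'
  have hcancel : ∀ c ∈ ((t \ s).powerset : Set (Finset α)), (s ∪ c) \ s = c := fun c hc =>
    union_sdiff_cancel_left (disjoint_sdiff.mono_right (mem_powerset.1 hc))
  rw [← hcancel c hc, ← hcancel c' hc']
  exact congrArg (· \ s) hcc'

theorem sum_powerset_sum_powerset_comm (t : Finset α) (f : Finset α → Finset α → M) :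
    ∑ u ∈ t.powerset, ∑ s ∈ u.powerset, f u s = ∑ s ∈ t.powerset, ∑ u ∈ Icc s t, f u s :=
  sum_comm' fun u s => by
    simp only [mem_powerset, mem_Icc]
    exact ⟨fun ⟨hut, hsu⟩ => ⟨⟨hsu, hut⟩, hsu.trans hut⟩, fun ⟨⟨hsu, hut⟩, _⟩ => ⟨hut, hsu⟩⟩

theorem sum_powerset_sum_powerset_sdiff (t : Finset α) (f : Finset α → Finset α → M) :
    ∑ s ∈ t.powerset, ∑ c ∈ (t \ s).powerset, f s c =
      ∑ u ∈ t.powerset, ∑ s ∈ u.powerset, f s (u \ s) := by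
  rw [sum_powerset_sum_powerset_comm]
  refine sum_congr rfl fun s hs => ?_
  rw [sum_Icc_eq_sum_powerset_sdiff (mem_powerset.1 hs)]
  refine sum_congr rfl fun c hc => ?_
  rw [union_sdiff_cancel_left (disjoint_sdiff.mono_right (mem_powerset.1 hc))]

theorem sum_powerset_union_of_disjoint {s t : Finset α} (h : Disjoint s t)
    (f : Finset α → M) :
    ∑ u ∈ (s ∪ t).powerset, f u = ∑ a ∈ s.powerset, ∑ c ∈ t.powerset, f (a ∪ c) := by
  rw [← sum_product']
  refine sum_nbij' (fun u => (u ∩ s, u ∩ t)) (fun p => p.1 ∪ p.2) ?_ ?_ ?_ ?_ ?_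
  · intro u _
    simp [inter_subset_right]
  · intro p hp
    simp only [mem_product, mem_powerset] at hp ⊢
    exact union_subset_union hp.1 hp.2
  · intro u hu
    simp only [mem_powerset] at hu
    simp [← inter_union_distrib_left, inter_eq_left.2 hu]
  · intro p hp
    simp only [mem_product, mem_powerset] at hp
    refine Prod.ext ?_ ?_ <;> dsimp only <;> rw [union_inter_distrib_right]
    · rw [inter_eq_left.2 hp.1, disjoint_iff_inter_eq_empty.1 (h.symm.mono_left hp.2),
        union_empty]
    · rw [inter_eq_left.2 hp.2, disjoint_iff_inter_eq_empty.1 (h.mono_left hp.1),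
        empty_union]
  · intro u hu
    simp only [mem_powerset] at hu
    rw [← inter_union_distrib_left, inter_eq_left.2 hu]

end Powerset

theorem neg_one_pow_sub_of_le {R : Type*} [Ring R] {m n : ℕ} (h : m ≤ n) :
    (-1 : R) ^ (n - m) = (-1) ^ n * (-1) ^ m := by
  conv_rhs => rw [← Nat.sub_add_cancel h, pow_add, mul_assoc, ← pow_add, ← two_mul, pow_mul,
    neg_one_sq, one_pow, mul_one]

section Moebius

variable {α R : Type*} [DecidableEq α] [CommRing R]

theorem sum_Icc_neg_one_pow_card {s t : Finset α} (h : s ⊆ t) :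
    ∑ u ∈ Icc s t, (-1 : R) ^ #u = if s = t then (-1) ^ #s else 0 := by
  have hsum := congrArg (Int.cast : ℤ → R) (sum_powerset_neg_one_pow_card (x := t \ s))
  push_cast at hsum
  rw [sum_Icc_eq_sum_powerset_sdiff h]
  calc ∑ c ∈ (t \ s).powerset, (-1 : R) ^ #(s ∪ c)
      = (-1) ^ #s * ∑ c ∈ (t \ s).powerset, (-1) ^ #c := by
        rw [mul_sum]
        refine sum_congr rfl fun c hc => ?_
        rw [card_union_of_disjoint (disjoint_sdiff.mono_right (mem_powerset.1 hc)), pow_add]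
    _ = if s = t then (-1) ^ #s else 0 := by
        rw [hsum]
        by_cases hst : s = t
        · simp [hst]
        · rw [if_neg hst, if_neg fun he => hst (h.antisymm (sdiff_eq_empty_iff_subset.1 he)),
            mul_zero]

def moebius (f : Finset α → R) (t : Finset α) : R :=
  ∑ s ∈ t.powerset, (-1) ^ (#t - #s) * f s

theorem sum_powerset_moebius (f : Finset α → R) (t : Finset α) :
    ∑ u ∈ t.powerset, moebius f u = f t := by
  simp only [moebius]
  rw [sum_powerset_sum_powerset_comm]
  calc ∑ s ∈ t.powerset, ∑ u ∈ Icc s t, (-1 : R) ^ (#u - #s) * f s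
      = ∑ s ∈ t.powerset, (-1) ^ #s * (∑ u ∈ Icc s t, (-1) ^ #u) * f s := by
        refine sum_congr rfl fun s _ => ?_
        rw [mul_sum, sum_mul]
        refine sum_congr rfl fun u hu => ?_
        rw [neg_one_pow_sub_of_le (card_le_card (mem_Icc.1 hu).1)]
        ring
    _ = f t := by
        rw [sum_eq_single_of_mem t (mem_powerset_self t)]
        · simp [← pow_add, ← two_mul, pow_mul]
        · intro s hs hst
          rw [sum_Icc_neg_one_pow_card (mem_powerset.1 hs), if_neg hst, mul_zero, zero_mul]

theorem moebius_sum_powerset (g : Finset α → R) (t : Finset α) :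
    moebius (fun u => ∑ s ∈ u.powerset, g s) t = g t := by
  simp only [moebius, mul_sum]
  rw [sum_powerset_sum_powerset_comm]
  calc ∑ s ∈ t.powerset, ∑ u ∈ Icc s t, (-1 : R) ^ (#t - #u) * g s
      = ∑ s ∈ t.powerset, (-1) ^ #t * (∑ u ∈ Icc s t, (-1) ^ #u) * g s := by
        refine sum_congr rfl fun s _ => ?_
        rw [mul_sum, sum_mul]
        refine sum_congr rfl fun u hu => ?_
        rw [neg_one_pow_sub_of_le (card_le_card (mem_Icc.1 hu).2)]
    _ = g t := by
        rw [sum_eq_single_of_mem t (mem_powerset_self t)]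
        · simp [← pow_add, ← two_mul, pow_mul]
        · intro s hs hst
          rw [sum_Icc_neg_one_pow_card (mem_powerset.1 hs), if_neg hst, mul_zero, zero_mul]

theorem moebius_union_right (f : Finset α → R) {s t : Finset α} (h : Disjoint s t) :
    moebius (fun u => f (u ∪ t)) s = ∑ c ∈ t.powerset, moebius f (s ∪ c) := by
  have hf : ∀ u ∈ s.powerset,
      f (u ∪ t) = ∑ a ∈ u.powerset, ∑ c ∈ t.powerset, moebius f (a ∪ c) := fun u hu => by
    rw [← sum_powerset_moebius f (u ∪ t),
      sum_powerset_union_of_disjoint (h.mono_left (mem_powerset.1 hu))]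
  calc moebius (fun u => f (u ∪ t)) s
      = moebius (fun u => ∑ a ∈ u.powerset, ∑ c ∈ t.powerset, moebius f (a ∪ c)) s :=
        sum_congr rfl fun u hu => by simp only [hf u hu]
    _ = ∑ c ∈ t.powerset, moebius f (s ∪ c) := moebius_sum_powerset _ s

end Moebius

theorem sum_range_choose_mul_factorial_mul_factorial (m a : ℕ) :
    (∑ k ∈ range (m + 1), m.choose k * ((m - k)! * (a + k)!)) * (a + 1) = (m + a + 1)! := by
  have hterm : ∀ k ∈ range (m + 1),
      m.choose k * ((m - k)! * (a + k)!) = m ! * a ! * (k + a).choose a := fun k hk => by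
    apply Nat.eq_of_mul_eq_mul_right (Nat.factorial_pos k)
    calc m.choose k * ((m - k)! * (a + k)!) * k !
        = m.choose k * k ! * (m - k)! * (k + a)! := by rw [add_comm a k]; ring
      _ = m ! * ((k + a).choose a * k ! * a !) := by
        rw [Nat.choose_mul_factorial_mul_factorial (mem_range_succ_iff.1 hk),
          Nat.add_choose_mul_factorial_mul_factorial]
      _ = m ! * a ! * (k + a).choose a * k ! := by ring
  rw [sum_congr rfl hterm, ← mul_sum, Nat.sum_range_add_choose, add_assoc,
    ← Nat.add_choose_mul_factorial_mul_factorial m (a + 1), Nat.factorial_succ a]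
  ring

section Weights

variable {α K : Type*} [DecidableEq α] [Field K] [CharZero K]

theorem sum_Icc_factorial_mul_factorial_div {s t : Finset α} (h : s ⊆ t) :
    ∑ u ∈ Icc s t, (((#t - #u)! * (#u)! : ℕ) : K) / ((#t + 1)! : ℕ) = 1 / (#s + 1) := by
  have hcard : #t = #(t \ s) + #s := (card_sdiff_add_card_eq_card h).symm
  have hterm : ∀ c ∈ (t \ s).powerset,
      (((#t - #(s ∪ c))! * (#(s ∪ c))! : ℕ) : K) / ((#t + 1)! : ℕ) =
        (((#(t \ s) - #c)! * (#s + #c)! : ℕ) : K) / ((#(t \ s) + #s + 1)! : ℕ) := fun c hc => by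
    rw [card_union_of_disjoint (disjoint_sdiff.mono_right (mem_powerset.1 hc)), hcard,
      Nat.add_comm #s, Nat.add_sub_add_right]
  rw [sum_Icc_eq_sum_powerset_sdiff h, sum_congr rfl hterm,
    sum_powerset_apply_card (fun k => (((#(t \ s) - k)! * (#s + k)! : ℕ) : K) /
      ((#(t \ s) + #s + 1)! : ℕ))]
  simp only [nsmul_eq_mul, ← mul_div_assoc, ← sum_div]
  rw [div_eq_div_iff (Nat.cast_ne_zero.2 (Nat.factorial_ne_zero _)) (Nat.cast_add_one_ne_zero _),
    one_mul]
  exact_mod_cast sum_range_choose_mul_factorial_mul_factorial #(t \ s) #s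

theorem sum_powerset_bernoulli_div (t : Finset α) :
    ∑ u ∈ t.powerset, (bernoulli #u : K) / (#(t \ u) + 1) = if t = ∅ then 1 else 0 := by
  have hspec := congrArg (Rat.cast : ℚ → K) (bernoulli_spec' #t)
  rw [Nat.sum_antidiagonal_eq_sum_range_succ_mk] at hspec
  push_cast at hspec
  have hterm : ∀ u ∈ t.powerset,
      (bernoulli #u : K) / (#(t \ u) + 1) = ((#t - #u : ℕ) + 1 : K)⁻¹ * bernoulli #u :=
    fun u hu => by
    rw [card_sdiff_of_subset (mem_powerset.1 hu), div_eq_inv_mul]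
  rw [sum_congr rfl hterm,
    sum_powerset_apply_card (fun k => ((#t - k : ℕ) + 1 : K)⁻¹ * bernoulli k)]
  convert hspec using 1
  · refine sum_congr rfl fun k hk => ?_
    rw [Nat.add_sub_cancel' (mem_range_succ_iff.1 hk), Nat.choose_symm (mem_range_succ_iff.1 hk),
      nsmul_eq_mul, div_eq_mul_inv, mul_assoc]
  · split_ifs <;> simp_all

end Weights

section Shapley

variable {d : ℕ} (v : (Fin d → ℝ) → Finset (Fin d) → ℝ) (x : Fin d → ℝ)

theorem nShapley_self_eq_sum_powerset (S : Finset (Fin d)) :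
    nShapley d v d x S =
      ∑ K ∈ Sᶜ.powerset, (bernoulli #K : ℝ) * deltaContribution d v x (S ∪ K) := by
  refine (sum_congr rfl fun k _ => sum_congr rfl fun K hK => ?_).trans
    (sum_fiberwise_of_maps_to (fun K hK => ?_) _)
  · rw [(mem_filter.1 hK).2]
  · have := card_le_card (mem_powerset.1 hK)
    rw [card_compl, Fintype.card_fin] at this
    exact mem_range_succ_iff.2 this

theorem deltaContribution_eq_sum_moebius (S : Finset (Fin d)) :
    deltaContribution d v x S = ∑ A ∈ Sᶜ.powerset, moebius (v x) (S ∪ A) / (#A + 1) := by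
  have hweight : ∀ T : Finset (Fin d),
      (((d - #T - #S)! * (#T)! : ℕ) : ℝ) / ((d - #S + 1)! : ℕ) =
        (((#Sᶜ - #T)! * (#T)! : ℕ) : ℝ) / ((#Sᶜ + 1)! : ℕ) := fun T => by
    rw [card_compl, Fintype.card_fin, Nat.sub_right_comm]
  calc deltaContribution d v x S
      = ∑ T ∈ Sᶜ.powerset, (((#Sᶜ - #T)! * (#T)! : ℕ) : ℝ) / ((#Sᶜ + 1)! : ℕ) *
          ∑ A ∈ T.powerset, moebius (v x) (S ∪ A) :=
        sum_congr rfl fun T hT => by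
          rw [← hweight, ← moebius_union_right (v x)
            (disjoint_compl_right.mono_right (mem_powerset.1 hT))]
          rfl
    _ = ∑ A ∈ Sᶜ.powerset, (∑ T ∈ Icc A Sᶜ, (((#Sᶜ - #T)! * (#T)! : ℕ) : ℝ) /
          ((#Sᶜ + 1)! : ℕ)) * moebius (v x) (S ∪ A) := by
        simp only [mul_sum, sum_mul]
        exact sum_powerset_sum_powerset_comm _ _
    _ = ∑ A ∈ Sᶜ.powerset, moebius (v x) (S ∪ A) / (#A + 1) :=
        sum_congr rfl fun A hA => by
          rw [sum_Icc_factorial_mul_factorial_div (mem_powerset.1 hA), one_div, inv_mul_eq_div]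

end Shapley

theorem dShapley_eq_moebius_general (d : ℕ)
    (v : (Fin d → ℝ) → Finset (Fin d) → ℝ) (x : Fin d → ℝ)
    (S : Finset (Fin d)) :
    nShapley d v d x S =
      ∑ L ∈ S.powerset, (-1 : ℝ) ^ (S.card - L.card) * v x L := by
  calc nShapley d v d x S
      = ∑ K ∈ Sᶜ.powerset, ∑ A ∈ (Sᶜ \ K).powerset,
          (bernoulli #K : ℝ) * (moebius (v x) (S ∪ (K ∪ A)) / (#A + 1)) := by
        rw [nShapley_self_eq_sum_powerset]
        refine sum_congr rfl fun K _ => ?_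
        rw [deltaContribution_eq_sum_moebius, compl_union, ← sdiff_eq_inter_compl, mul_sum]
        simp only [union_assoc]
    _ = ∑ D ∈ Sᶜ.powerset, (∑ K ∈ D.powerset, (bernoulli #K : ℝ) / (#(D \ K) + 1)) *
          moebius (v x) (S ∪ D) := by
        rw [sum_powerset_sum_powerset_sdiff]
        refine sum_congr rfl fun D _ => ?_
        rw [sum_mul]
        refine sum_congr rfl fun K hK => ?_
        rw [union_sdiff_of_subset (mem_powerset.1 hK)]
        ring
    _ = moebius (v x) S := by
        simp only [sum_powerset_bernoulli_div, ite_mul, one_mul, zero_mul, sum_ite_eq',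
          empty_mem_powerset, if_true, union_empty]

/-- The `d`-Shapley Values are the Möbius transform of the value function:
`Φ^d_S(x) = ∑_{L ⊆ S} (-1)^{|S|-|L|} · v(x, L)` for every nonempty `S ⊆ [d]`. -/
theorem dShapley_eq_moebius (d : ℕ) (hd : 1 ≤ d)
    (v : (Fin d → ℝ) → Finset (Fin d) → ℝ) (x : Fin d → ℝ)
    (S : Finset (Fin d)) (hS : S.Nonempty) :
    nShapley d v d x S =
      ∑ L ∈ S.powerset, (-1 : ℝ) ^ (S.card - L.card) * v x L :=
  dShapley_eq_moebius_general d v x S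
end

section
/- n-Shapley Values from the Shapley-GAM: for every value function v, every x ∈ ℝ^d, every 1 ≤ n ≤ d and every nonempty S ⊆ [d] with |S| ≤ n, Φ^n_S(x) = f_S(x) + ∑_{K ⊆ [d]∖S with |S|+|K| ≥ n+1} c_{n−|S|,|K|} · f_{S∪K}(x), where the coefficients are c_{j,m} = ∑_{k=0}^{j} binom(m,k) · B_k/(1+m−k) and f_T(x) = ∑_{L ⊆ T} (−1)^{|T|−|L|} · v(x, L) are the Shapley-GAM component functions of v. -/
open Finset

open scoped Nat

/-!
Write `f` for the Möbius transform of `v x`, so that `v x A = ∑_{M ⊆ A} f M`. For disjoint `S`, `T`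
the alternating sum over `L ⊆ S` in `Δ_S` keeps exactly the terms `f (S ∪ U)` with `U ⊆ T`, and the
Shapley weights of all `T ⊇ U` add up to the Beta integral `1 / (|U| + 1)`; hence
`Δ_S = ∑_{U ⊆ Sᶜ} f (S ∪ U) / (|U| + 1)`. Substituting this into `Φ^n_S` and counting the
`binom(|W|, k)` sets `K ⊆ W` of size `k` gives `Φ^n_S = ∑_{W ⊆ Sᶜ} c_{n-|S|,|W|} f (S ∪ W)`.
When `|W| ≤ n - |S|` the sum defining the coefficient runs over all `k ≤ |W|`, and since
`binom(m, k) / (m + 1 - k) = binom(m + 1, k) / (m + 1)`, the identity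
`∑_{k ≤ m} binom(m + 1, k) B_k = [m = 0]` makes it vanish except at `W = ∅`.
-/

section Moebius

variable {α R : Type*} [DecidableEq α] [CommRing R]

def moebiusTransform (v : Finset α → R) (A : Finset α) : R :=
  ∑ L ∈ A.powerset, (-1) ^ (A.card - L.card) * v L

theorem moebiusTransform_insert (v : Finset α → R) {a : α} {B : Finset α} (ha : a ∉ B) :
    moebiusTransform v (insert a B) = moebiusTransform (fun L => v (insert a L) - v L) B := by
  have sign_of_subset {L : Finset α} (hL : L ∈ B.powerset) :
      (-1 : R) ^ (B.card + 1 - L.card) = -(-1) ^ (B.card - L.card) := by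
    rw [Nat.sub_add_comm (card_le_card (mem_powerset.mp hL)), pow_succ, mul_neg_one]
  have card_insert_of_subset {L : Finset α} (hL : L ∈ B.powerset) :
      (insert a L).card = L.card + 1 :=
    card_insert_of_notMem fun haL => ha (mem_powerset.mp hL haL)
  simp only [moebiusTransform, sum_powerset_insert ha, card_insert_of_notMem ha, mul_sub,
    sum_sub_distrib]
  rw [add_comm, sub_eq_add_neg, ← sum_neg_distrib]
  congr 1 <;> refine sum_congr rfl fun L hL => ?_
  · rw [card_insert_of_subset hL, Nat.add_sub_add_right]
  · rw [sign_of_subset hL, neg_mul]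

theorem moebiusTransform_union_right (v : Finset α → R) {S T : Finset α} (hST : Disjoint S T) :
    moebiusTransform (fun L => v (L ∪ T)) S = ∑ U ∈ T.powerset, moebiusTransform v (S ∪ U) := by
  induction T using Finset.induction generalizing v with
  | empty => simp
  | @insert a T haT ih =>
    have haS : a ∉ S := disjoint_right.mp hST (mem_insert_self a T)
    have hST' : Disjoint S T := hST.mono_right (subset_insert a T)
    have insert_step : ∀ U ∈ T.powerset, moebiusTransform v (S ∪ insert a U)
        = moebiusTransform (fun L => v (insert a L) - v L) (S ∪ U) := fun U hU => by
      rw [union_insert, moebiusTransform_insert]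
      exact notMem_union.mpr ⟨haS, fun haU => haT (mem_powerset.mp hU haU)⟩
    rw [sum_powerset_insert haT, sum_congr rfl insert_step, ← ih v hST',
      ← ih (fun L => v (insert a L) - v L) hST']
    simp only [moebiusTransform, union_insert, ← sum_add_distrib]
    exact sum_congr rfl fun L _ => by ring

end Moebius

section Intervals

variable {α M : Type*} [DecidableEq α] [AddCommMonoid M]

theorem sum_Icc_eq_sum_powerset_sdiff_s10 {U A : Finset α} (hU : U ⊆ A) (g : Finset α → M) :
    ∑ T ∈ Icc U A, g T = ∑ V ∈ (A \ U).powerset, g (U ∪ V) := by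
  rw [Icc_eq_image_powerset hU, sum_image]
  intro V₁ h₁ V₂ h₂ h
  rw [← union_sdiff_cancel_left (disjoint_sdiff.mono_right (mem_powerset.mp h₁)),
    ← union_sdiff_cancel_left (disjoint_sdiff.mono_right (mem_powerset.mp h₂))]
  exact congrArg (· \ U) h

theorem sum_Icc_apply_card {U A : Finset α} (hU : U ⊆ A) (g : ℕ → M) :
    ∑ T ∈ Icc U A, g T.card
      = ∑ j ∈ range (A.card - U.card + 1), (A.card - U.card).choose j • g (U.card + j) := by
  rw [sum_Icc_eq_sum_powerset_sdiff_s10 hU, ← card_sdiff_of_subset hU,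
    ← sum_powerset_apply_card (fun j => g (U.card + j))]
  exact sum_congr rfl fun V hV => by
    rw [card_union_of_disjoint (disjoint_sdiff.mono_right (mem_powerset.mp hV))]

theorem sum_powerset_sum_powerset_comm_s10 (A : Finset α) (g : Finset α → Finset α → M) :
    ∑ T ∈ A.powerset, ∑ U ∈ T.powerset, g U T = ∑ U ∈ A.powerset, ∑ T ∈ Icc U A, g U T :=
  sum_comm' fun T U => by
    simp only [mem_powerset, mem_Icc]
    exact ⟨fun ⟨hTA, hUT⟩ => ⟨⟨hUT, hTA⟩, hUT.trans hTA⟩, fun ⟨⟨hUT, hTA⟩, _⟩ => ⟨hTA, hUT⟩⟩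

end Intervals

namespace Nat

theorem succ_mul_sum_choose_mul_factorial_mul_factorial (u r : ℕ) :
    (u + 1) * ∑ j ∈ range (r + 1), r.choose j * ((r - j)! * (u + j)!) = (u + r + 1)! := by
  have term (j : ℕ) (hj : j ≤ r) :
      r.choose j * ((r - j)! * (u + j)!) = r ! * u ! * (j + u).choose u := by
    apply Nat.eq_of_mul_eq_mul_right (factorial_pos j)
    calc r.choose j * ((r - j)! * (u + j)!) * j !
        = r.choose j * j ! * (r - j)! * (j + u)! := by rw [add_comm u j]; ring
      _ = r ! * ((j + u).choose u * j ! * u !) := by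
        rw [choose_mul_factorial_mul_factorial hj, add_choose_mul_factorial_mul_factorial]
      _ = r ! * u ! * (j + u).choose u * j ! := by ring
  rw [sum_congr rfl fun j hj => term j (by grind), ← mul_sum, sum_range_add_choose]
  calc (u + 1) * (r ! * u ! * (r + u + 1).choose (u + 1))
      = (r + u + 1).choose (u + 1) * (u + 1)! * (r + u + 1 - (u + 1))! := by
        rw [factorial_succ, show r + u + 1 - (u + 1) = r by omega]; ring
    _ = (u + r + 1)! := by rw [choose_mul_factorial_mul_factorial (by omega), add_comm r u]

end Nat

theorem sum_Icc_factorial_mul_factorial_div_s10 {α K : Type*} [DecidableEq α] [Field K] [CharZero K]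
    {U A : Finset α} (hU : U ⊆ A) :
    ∑ T ∈ Icc U A, (((A.card - T.card)! * T.card ! : ℕ) : K) / ((A.card + 1)! : ℕ)
      = 1 / (U.card + 1) := by
  obtain ⟨r, hr⟩ := Nat.exists_eq_add_of_le (card_le_card hU)
  rw [← sum_div, sum_Icc_apply_card hU (fun t => (((A.card - t)! * t ! : ℕ) : K)), hr,
    Nat.add_sub_cancel_left, div_eq_div_iff (Nat.cast_ne_zero.mpr (Nat.factorial_ne_zero _))
      (Nat.cast_add_one_ne_zero _), one_mul, ← Nat.succ_mul_sum_choose_mul_factorial_mul_factorial]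
  simp only [Nat.add_sub_add_left, nsmul_eq_mul]
  push_cast
  ring

theorem deltaContribution_eq_sum_moebiusTransform (d : ℕ) (v : (Fin d → ℝ) → Finset (Fin d) → ℝ)
    (x : Fin d → ℝ) (R : Finset (Fin d)) :
    deltaContribution d v x R
      = ∑ U ∈ Rᶜ.powerset, 1 / ((U.card : ℝ) + 1) * moebiusTransform (v x) (R ∪ U) := by
  have card_compl_eq : Rᶜ.card = d - R.card := by rw [card_compl, Fintype.card_fin]
  calc deltaContribution d v x R
      = ∑ T ∈ Rᶜ.powerset, ∑ U ∈ T.powerset,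
          (((Rᶜ.card - T.card)! * T.card ! : ℕ) : ℝ) / ((Rᶜ.card + 1)! : ℕ)
            * moebiusTransform (v x) (R ∪ U) := by
        refine sum_congr rfl fun T hT => ?_
        have hRT : Disjoint R T := disjoint_compl_right.mono_right (mem_powerset.mp hT)
        rw [card_compl_eq, Nat.sub_right_comm, ← mul_sum,
          ← moebiusTransform_union_right (v x) hRT]
        rfl
    _ = ∑ U ∈ Rᶜ.powerset, ∑ T ∈ Icc U Rᶜ,
          (((Rᶜ.card - T.card)! * T.card ! : ℕ) : ℝ) / ((Rᶜ.card + 1)! : ℕ)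
            * moebiusTransform (v x) (R ∪ U) := sum_powerset_sum_powerset_comm_s10 _ _
    _ = _ := sum_congr rfl fun U hU => by
        rw [← sum_mul, sum_Icc_factorial_mul_factorial_div_s10 (mem_powerset.mp hU)]

noncomputable def shapleyGamCoeff (j m : ℕ) : ℝ :=
  ∑ k ∈ range (j + 1), (m.choose k : ℝ) * (bernoulli k : ℝ) / (1 + (m : ℝ) - (k : ℝ))

theorem shapleyGamCoeff_of_le {j m : ℕ} (h : m ≤ j) :
    shapleyGamCoeff j m = if m = 0 then 1 else 0 := by
  have vanish : ∀ k ∈ range (j + 1), k ∉ range (m + 1) →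
      (m.choose k : ℝ) * (bernoulli k : ℝ) / (1 + (m : ℝ) - (k : ℝ)) = 0 := fun k _ hk => by
    rw [Nat.choose_eq_zero_of_lt (by grind), Nat.cast_zero, zero_mul, zero_div]
  have rescale : ∀ k ∈ range (m + 1),
      (m.choose k : ℝ) * (bernoulli k : ℝ) / (1 + (m : ℝ) - (k : ℝ))
        = ((m + 1).choose k : ℝ) * (bernoulli k : ℝ) / (m + 1) := fun k hk => by
    have hkm : (k : ℝ) ≤ m := by exact_mod_cast mem_range_succ_iff.mp hk
    have key := congrArg (Nat.cast : ℕ → ℝ) (Nat.choose_mul_succ_eq m k)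
    push_cast [Nat.cast_sub (Nat.le_succ_of_le (mem_range_succ_iff.mp hk))] at key
    rw [div_eq_div_iff (by linarith) (by positivity)]
    linear_combination (bernoulli k : ℝ) * key
  have sum_bernoulli_real : ∑ k ∈ range (m + 1), ((m + 1).choose k : ℝ) * (bernoulli k : ℝ)
      = if m = 0 then 1 else 0 := by
    have h := congrArg (Rat.cast : ℚ → ℝ) (sum_bernoulli (m + 1))
    push_cast [apply_ite (Rat.cast : ℚ → ℝ), Nat.add_eq_right] at h
    exact h
  rw [shapleyGamCoeff, ← sum_subset (range_subset_range.mpr (by omega)) vanish,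
    sum_congr rfl rescale, ← sum_div, sum_bernoulli_real]
  split_ifs with hm <;> simp [hm]

theorem sum_bernoulli_mul_deltaContribution_of_card_eq (d : ℕ)
    (v : (Fin d → ℝ) → Finset (Fin d) → ℝ) (x : Fin d → ℝ) (S : Finset (Fin d)) (k : ℕ) :
    ∑ K ∈ Sᶜ.powerset.filter (fun K => K.card = k),
        (bernoulli k : ℝ) * deltaContribution d v x (S ∪ K)
      = ∑ W ∈ Sᶜ.powerset, (W.card.choose k : ℝ) * (bernoulli k : ℝ) / (1 + (W.card : ℝ) - k)
          * moebiusTransform (v x) (S ∪ W) := by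
  calc _ = ∑ K ∈ Sᶜ.powerset, if K.card = k then ∑ W ∈ Icc K Sᶜ,
          (bernoulli k : ℝ) / (1 + (W.card : ℝ) - k) * moebiusTransform (v x) (S ∪ W) else 0 := by
        rw [sum_filter]
        refine sum_congr rfl fun K hK => ?_
        split_ifs with hk
        · subst hk
          rw [deltaContribution_eq_sum_moebiusTransform, compl_union, ← sdiff_eq_inter_compl,
            sum_Icc_eq_sum_powerset_sdiff_s10 (mem_powerset.mp hK), mul_sum]
          refine sum_congr rfl fun U hU => ?_
          rw [card_union_of_disjoint (disjoint_sdiff.mono_right (mem_powerset.mp hU)),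
            union_assoc]
          push_cast
          ring
        · rfl
    _ = ∑ W ∈ Sᶜ.powerset, ∑ K ∈ W.powerset, if K.card = k then
          (bernoulli k : ℝ) / (1 + (W.card : ℝ) - k) * moebiusTransform (v x) (S ∪ W) else 0 := by
        simp only [sum_powerset_sum_powerset_comm_s10, sum_ite_irrel, sum_const_zero]
    _ = _ := sum_congr rfl fun W _ => by
        rw [← sum_filter, ← powersetCard_eq_filter, sum_const, card_powersetCard, nsmul_eq_mul]
        ring

theorem nShapley_eq_sum_shapleyGamCoeff_mul_moebiusTransform (d : ℕ)
    (v : (Fin d → ℝ) → Finset (Fin d) → ℝ) (n : ℕ) (x : Fin d → ℝ) (S : Finset (Fin d)) :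
    nShapley d v n x S = ∑ W ∈ Sᶜ.powerset,
      shapleyGamCoeff (n - S.card) W.card * moebiusTransform (v x) (S ∪ W) := by
  simp only [nShapley, sum_bernoulli_mul_deltaContribution_of_card_eq, shapleyGamCoeff, sum_mul]
  exact sum_comm

theorem nShapley_from_shapley_gam_general (d : ℕ)
    (v : (Fin d → ℝ) → Finset (Fin d) → ℝ) (x : Fin d → ℝ)
    (n : ℕ)
    (S : Finset (Fin d)) (hSn : S.card ≤ n)
    (f : Finset (Fin d) → ℝ)
    (hf : ∀ T : Finset (Fin d),
      f T = ∑ L ∈ T.powerset, (-1 : ℝ) ^ (T.card - L.card) * v x L)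
    (c : ℕ → ℕ → ℝ)
    (hc : ∀ j m : ℕ,
      c j m = ∑ k ∈ Finset.range (j + 1),
        (m.choose k : ℝ) * (bernoulli k : ℝ) / (1 + (m : ℝ) - (k : ℝ))) :
    nShapley d v n x S =
      f S + ∑ K ∈ Sᶜ.powerset.filter (fun K => n + 1 ≤ S.card + K.card),
        c (n - S.card) K.card * f (S ∪ K) := by
  obtain rfl : f = moebiusTransform (v x) := funext hf
  obtain rfl : c = shapleyGamCoeff := funext₂ hc
  rw [nShapley_eq_sum_shapleyGamCoeff_mul_moebiusTransform,
    ← sum_filter_not_add_sum_filter _ (fun K => n + 1 ≤ S.card + K.card)]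
  congr 1
  have empty_mem : ∅ ∈ Sᶜ.powerset.filter (fun K => ¬n + 1 ≤ S.card + K.card) := by
    simpa using hSn
  rw [sum_eq_single_of_mem ∅ empty_mem fun W hW hW_ne => ?_]
  · rw [card_empty, shapleyGamCoeff_of_le (Nat.zero_le _), if_pos rfl, one_mul, union_empty]
  · have hW_low : W.card ≤ n - S.card := by grind
    rw [shapleyGamCoeff_of_le hW_low, if_neg (card_ne_zero.mpr (nonempty_iff_ne_empty.mpr hW_ne)),
      zero_mul]

/-- `n`-Shapley Values from the Shapley-GAM: with Shapley-GAM component functions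
`f_T(x) = ∑_{L ⊆ T} (-1)^{|T|-|L|} · v(x, L)` and coefficients
`c_{j,m} = ∑_{k=0}^{j} binom(m,k) · B_k/(1+m-k)`, we have
`Φ^n_S(x) = f_S(x) + ∑_{K ⊆ [d]∖S, |S|+|K| ≥ n+1} c_{n-|S|,|K|} · f_{S∪K}(x)`. -/
theorem nShapley_from_shapley_gam (d : ℕ) (hd : 1 ≤ d)
    (v : (Fin d → ℝ) → Finset (Fin d) → ℝ) (x : Fin d → ℝ)
    (n : ℕ) (hn : 1 ≤ n) (hnd : n ≤ d)
    (S : Finset (Fin d)) (hS : S.Nonempty) (hSn : S.card ≤ n)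
    (f : Finset (Fin d) → ℝ)
    (hf : ∀ T : Finset (Fin d),
      f T = ∑ L ∈ T.powerset, (-1 : ℝ) ^ (T.card - L.card) * v x L)
    (c : ℕ → ℕ → ℝ)
    (hc : ∀ j m : ℕ,
      c j m = ∑ k ∈ Finset.range (j + 1),
        (m.choose k : ℝ) * (bernoulli k : ℝ) / (1 + (m : ℝ) - (k : ℝ))) :
    nShapley d v n x S =
      f S + ∑ K ∈ Sᶜ.powerset.filter (fun K => n + 1 ≤ S.card + K.card),
        c (n - S.card) K.card * f (S ∪ K) :=
  nShapley_from_shapley_gam_general d v x n S hSn f hf c hc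
end

section
/- Relationship between n-Shapley Values of different orders: for every value function v, every x ∈ ℝ^d, all 1 ≤ m ≤ n ≤ d and every nonempty S ⊆ [d] with |S| ≤ m, Φ^m_S(x) = Φ^n_S(x) + ∑_{K ⊆ [d]∖S with m < |S|+|K| ≤ n} c_{m−|S|,|K|} · Φ^n_{S∪K}(x), where the coefficients are c_{j,ℓ} = ∑_{k=0}^{j} binom(ℓ,k) · B_k/(1+ℓ−k). -/
open Finset

/-! In the basis `Δ_{S ∪ U}`, `U ⊆ [d] ∖ S`, the value `Φ^n_S` has coefficient `B_{|U|}` when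
`|S| + |U| ≤ n` and `0` otherwise, and `Φ^n_{S ∪ K}` contributes `B_{|U| - |K|}` for `K ⊆ U`.
Comparing coefficients, the theorem becomes an identity between Bernoulli numbers: for `j < u`,
`∑_{ℓ ≤ u} binom(u,ℓ) c_{j,ℓ} B_{u-ℓ} = 0`, while `c_{j,ℓ} = [ℓ = 0]` for `ℓ ≤ j`.
Both follow from `∑_{k ≤ t} binom(t,k) B_k / (t+1-k) = [t = 0]`, a form of
`∑_k binom(t+1,k) B_k = [t = 0]`, the first after substituting
`binom(u,ℓ) binom(ℓ,k) = binom(u,k) binom(u-k,ℓ-k)`. -/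

theorem sum_range_choose_mul_bernoulli_div (t : ℕ) :
    ∑ k ∈ range (t + 1), (t.choose k : ℚ) * bernoulli k / (1 + t - k) =
      if t = 0 then 1 else 0 := by
  have hterm : ∀ k ∈ range (t + 1), (t.choose k : ℚ) * bernoulli k / (1 + t - k) =
      ((t + 1).choose k : ℚ) * bernoulli k / (t + 1) := by
    intro k hk
    have hkt : k ≤ t := Nat.lt_succ_iff.mp (mem_range.mp hk)
    have hchoose : (t.choose k : ℚ) * (t + 1) = ((t + 1).choose k : ℚ) * (1 + t - k) := by
      have hsub : ((t + 1 - k : ℕ) : ℚ) = 1 + t - k := by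
        rw [Nat.cast_sub (by omega)]; push_cast; ring
      rw [← hsub]
      exact_mod_cast Nat.choose_mul_succ_eq t k
    have hpos : (0 : ℚ) < 1 + t - k := by
      have : (k : ℚ) ≤ t := by exact_mod_cast hkt
      linarith
    rw [div_eq_div_iff hpos.ne' (by positivity)]
    linear_combination bernoulli k * hchoose
  rw [sum_congr rfl hterm, ← sum_div, sum_bernoulli]
  by_cases ht : t = 0 <;> simp [ht]

theorem sum_range_choose_mul_bernoulli_sub_div (t : ℕ) :
    ∑ r ∈ range (t + 1), (t.choose r : ℚ) * bernoulli (t - r) / (1 + r) =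
      if t = 0 then 1 else 0 := by
  rw [← sum_range_choose_mul_bernoulli_div, ← sum_range_reflect]
  refine sum_congr rfl fun r hr => ?_
  have hrt : r ≤ t := Nat.lt_succ_iff.mp (mem_range.mp hr)
  rw [Nat.add_sub_cancel, Nat.choose_symm hrt, Nat.sub_sub_self hrt, Nat.cast_sub hrt]
  ring

def shapleyOrderCoeff (j ℓ : ℕ) : ℚ :=
  ∑ k ∈ range (j + 1), (ℓ.choose k : ℚ) * bernoulli k / (1 + ℓ - k)

theorem shapleyOrderCoeff_of_le {j ℓ : ℕ} (h : ℓ ≤ j) :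
    shapleyOrderCoeff j ℓ = if ℓ = 0 then 1 else 0 := by
  rw [shapleyOrderCoeff, ← sum_range_choose_mul_bernoulli_div]
  refine (sum_subset (range_subset_range.mpr (by omega)) fun k _ hk => ?_).symm
  rw [Nat.choose_eq_zero_of_lt (by simpa using hk)]
  simp

theorem sum_range_choose_mul_choose_mul_bernoulli_div {k u : ℕ} (h : k < u) :
    ∑ ℓ ∈ range (u + 1),
      (u.choose ℓ : ℚ) * ℓ.choose k * bernoulli (u - ℓ) / (1 + ℓ - k) = 0 := by
  rw [← sum_range_add_sum_Ico _ (by omega : k ≤ u + 1), sum_Ico_eq_sum_range]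
  have hlow : ∑ ℓ ∈ range k,
      (u.choose ℓ : ℚ) * ℓ.choose k * bernoulli (u - ℓ) / (1 + ℓ - k) = 0 :=
    sum_eq_zero fun ℓ hℓ => by rw [Nat.choose_eq_zero_of_lt (mem_range.mp hℓ)]; simp
  have hshift : ∀ r ∈ range (u + 1 - k),
      (u.choose (k + r) : ℚ) * (k + r).choose k * bernoulli (u - (k + r)) / (1 + ↑(k + r) - k) =
        u.choose k * ((u - k).choose r * bernoulli (u - k - r) / (1 + r)) := by
    intro r _
    have hmul := Nat.choose_mul (n := u) (Nat.le_add_right k r)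
    rw [Nat.add_sub_cancel_left] at hmul
    rw [Nat.sub_sub, ← mul_div_assoc, ← mul_assoc]
    push_cast
    rw [show (1 : ℚ) + (k + r) - k = 1 + r by ring]
    exact_mod_cast congrArg (fun q : ℕ => (q : ℚ) * bernoulli (u - (k + r)) / (1 + r)) hmul
  rw [hlow, zero_add, sum_congr rfl hshift, ← mul_sum, show u + 1 - k = u - k + 1 by omega,
    sum_range_choose_mul_bernoulli_sub_div, if_neg (by omega), mul_zero]

theorem sum_range_choose_mul_shapleyOrderCoeff_mul_bernoulli {j u : ℕ} (h : j < u) :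
    ∑ ℓ ∈ range (u + 1),
      (u.choose ℓ : ℚ) * shapleyOrderCoeff j ℓ * bernoulli (u - ℓ) = 0 := by
  simp_rw [shapleyOrderCoeff, mul_sum, sum_mul]
  rw [sum_comm]
  refine sum_eq_zero fun k hk => ?_
  have hku : k < u := by have := mem_range.mp hk; omega
  rw [← mul_zero (bernoulli k), ← sum_range_choose_mul_choose_mul_bernoulli_div hku, mul_sum]
  exact sum_congr rfl fun ℓ _ => by ring

theorem ite_bernoulli_eq_add_sum_shapleyOrderCoeff (j u : ℕ) :
    (if u ≤ j then bernoulli u else 0) =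
      bernoulli u + ∑ ℓ ∈ range (u + 1),
        (u.choose ℓ : ℚ) * (if j < ℓ then shapleyOrderCoeff j ℓ else 0) *
          bernoulli (u - ℓ) := by
  split_ifs with hu
  · refine (add_eq_left.mpr (sum_eq_zero fun ℓ hℓ => ?_)).symm
    rw [if_neg (by have := mem_range.mp hℓ; omega)]
    simp
  · have htrunc : ∀ ℓ, (if j < ℓ then shapleyOrderCoeff j ℓ else 0) =
        shapleyOrderCoeff j ℓ - if ℓ = 0 then 1 else 0 := by
      intro ℓ
      by_cases hjℓ : j < ℓ
      · rw [if_pos hjℓ, if_neg (by omega), sub_zero]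
      · rw [if_neg hjℓ, shapleyOrderCoeff_of_le (by omega), sub_self]
    simp_rw [htrunc, mul_sub, sub_mul, sum_sub_distrib,
      sum_range_choose_mul_shapleyOrderCoeff_mul_bernoulli (by omega : j < u)]
    simp

section Shapley

variable {d : ℕ} (v : (Fin d → ℝ) → Finset (Fin d) → ℝ) (x : Fin d → ℝ) {n : ℕ}

-- Without `hS`, the truncated `n - #S` would still keep the term `U = ∅` of `nShapley`.
theorem nShapley_eq_sum_powerset {S : Finset (Fin d)} (hS : #S ≤ n) :
    nShapley d v n x S =
      ∑ U ∈ Sᶜ.powerset with #S + #U ≤ n,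
        (bernoulli #U : ℝ) * deltaContribution d v x (S ∪ U) := by
  rw [nShapley]
  calc _ = ∑ k ∈ range (n - #S + 1), ∑ U ∈ Sᶜ.powerset with #U = k,
        (bernoulli #U : ℝ) * deltaContribution d v x (S ∪ U) :=
        sum_congr rfl fun k _ => sum_congr rfl fun U hU => by rw [(mem_filter.mp hU).2]
    _ = _ := by
      rw [sum_fiberwise_eq_sum_filter]
      congr 1
      ext U
      simp only [mem_filter, mem_range]
      exact and_congr_right fun _ => by omega

theorem nShapley_union {S K : Finset (Fin d)} (hK : K ⊆ Sᶜ) (hn : #S + #K ≤ n) :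
    nShapley d v n x (S ∪ K) =
      ∑ U ∈ Sᶜ.powerset with K ⊆ U ∧ #S + #U ≤ n,
        (bernoulli (#U - #K) : ℝ) * deltaContribution d v x (S ∪ U) := by
  have hSK : Disjoint S K := le_compl_iff_disjoint_left.mp hK
  rw [nShapley_eq_sum_powerset v x (by rwa [card_union_of_disjoint hSK])]
  have hcompl : ∀ U : Finset (Fin d), U ⊆ (S ∪ K)ᶜ ↔ U ⊆ Sᶜ ∧ Disjoint U K := by
    intro U
    rw [compl_union, subset_inter_iff, le_compl_iff_disjoint_right, le_compl_iff_disjoint_right]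
  refine sum_nbij' (K ∪ ·) (· \ K) ?_ ?_ ?_ ?_ ?_ <;> intro U hU <;>
    simp only [mem_filter, mem_powerset, hcompl, card_union_of_disjoint hSK] at hU ⊢
  · rw [card_union_of_disjoint hU.1.2.symm]
    exact ⟨union_subset hK hU.1.1, subset_union_left, by omega⟩
  · have hKU : #K ≤ #U := card_le_card hU.2.1
    rw [card_sdiff_of_subset hU.2.1]
    exact ⟨⟨sdiff_subset.trans hU.1, disjoint_sdiff_self_left⟩, by omega⟩
  · exact union_sdiff_cancel_left hU.1.2.symm
  · exact union_sdiff_of_subset hU.2.1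
  · rw [union_assoc, card_union_of_disjoint hU.1.2.symm, Nat.add_sub_cancel_left]

theorem sum_mul_nShapley_union (a : ℕ → ℝ) (S : Finset (Fin d)) :
    ∑ K ∈ Sᶜ.powerset with #S + #K ≤ n, a #K * nShapley d v n x (S ∪ K) =
      ∑ U ∈ Sᶜ.powerset with #S + #U ≤ n,
        (∑ ℓ ∈ range (#U + 1), ((#U).choose ℓ : ℝ) * a ℓ * bernoulli (#U - ℓ)) *
          deltaContribution d v x (S ∪ U) := by
  calc _ = ∑ K ∈ Sᶜ.powerset with #S + #K ≤ n,
        ∑ U ∈ Sᶜ.powerset with K ⊆ U ∧ #S + #U ≤ n,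
          a #K * ((bernoulli (#U - #K) : ℝ) * deltaContribution d v x (S ∪ U)) := by
        refine sum_congr rfl fun K hK => ?_
        rw [mem_filter, mem_powerset] at hK
        rw [nShapley_union v x hK.1 hK.2, mul_sum]
    _ = ∑ U ∈ Sᶜ.powerset with #S + #U ≤ n, ∑ K ∈ U.powerset,
        a #K * ((bernoulli (#U - #K) : ℝ) * deltaContribution d v x (S ∪ U)) := by
        refine sum_comm' fun K U => ?_
        simp only [mem_filter, mem_powerset]
        constructor
        · rintro ⟨-, hUS, hKU, hUn⟩
          exact ⟨hKU, hUS, hUn⟩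
        · rintro ⟨hKU, hUS, hUn⟩
          have := card_le_card hKU
          exact ⟨⟨hKU.trans hUS, by omega⟩, hUS, hKU, hUn⟩
    _ = _ := by
        refine sum_congr rfl fun U _ => ?_
        rw [sum_powerset_apply_card (fun k => a k * ((bernoulli (#U - k) : ℝ) *
          deltaContribution d v x (S ∪ U))), sum_mul]
        exact sum_congr rfl fun ℓ _ => by rw [nsmul_eq_mul]; ring

end Shapley

theorem nShapley_order_relation_general (d : ℕ)
    (v : (Fin d → ℝ) → Finset (Fin d) → ℝ) (x : Fin d → ℝ)
    (m n : ℕ) (hmn : m ≤ n)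
    (S : Finset (Fin d)) (hSm : S.card ≤ m)
    (c : ℕ → ℕ → ℝ)
    (hc : ∀ j ℓ : ℕ,
      c j ℓ = ∑ k ∈ Finset.range (j + 1),
        (ℓ.choose k : ℝ) * (bernoulli k : ℝ) / (1 + (ℓ : ℝ) - (k : ℝ))) :
    nShapley d v m x S =
      nShapley d v n x S +
        ∑ K ∈ Sᶜ.powerset.filter (fun K => m < S.card + K.card ∧ S.card + K.card ≤ n),
          c (m - S.card) K.card * nShapley d v n x (S ∪ K) := by
  set j := m - #S with hj
  have hc' : ∀ ℓ, (shapleyOrderCoeff j ℓ : ℝ) = c j ℓ := fun ℓ => by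
    rw [hc, shapleyOrderCoeff]; push_cast; rfl
  have hrange : ∑ K ∈ Sᶜ.powerset with m < #S + #K ∧ #S + #K ≤ n,
      c j #K * nShapley d v n x (S ∪ K) =
      ∑ K ∈ Sᶜ.powerset with #S + #K ≤ n,
        (if j < #K then c j #K else 0) * nShapley d v n x (S ∪ K) := by
    rw [sum_filter, sum_filter]
    refine sum_congr rfl fun K _ => ?_
    split_ifs <;> first | rfl | omega | rw [zero_mul]
  rw [hrange, sum_mul_nShapley_union v x (fun k => if j < k then c j k else 0),
    nShapley_eq_sum_powerset v x hSm, nShapley_eq_sum_powerset v x (hSm.trans hmn),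
    sum_filter, sum_filter, sum_filter, ← sum_add_distrib]
  refine sum_congr rfl fun U _ => ?_
  by_cases hn : #S + #U ≤ n
  · have key := congrArg (Rat.cast : ℚ → ℝ) (ite_bernoulli_eq_add_sum_shapleyOrderCoeff j #U)
    simp only [apply_ite (Rat.cast : ℚ → ℝ), Rat.cast_add, Rat.cast_sum, Rat.cast_mul,
      Rat.cast_natCast, Rat.cast_zero, hc'] at key
    rw [if_pos hn, if_pos hn, ← add_mul, ← key, ite_mul, zero_mul]
    exact if_congr (by omega) rfl rfl
  · rw [if_neg hn, if_neg hn, if_neg (by omega), add_zero]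

/-- Relationship between `n`-Shapley Values of different orders: for `1 ≤ m ≤ n ≤ d`
and nonempty `S ⊆ [d]` with `|S| ≤ m`,
`Φ^m_S(x) = Φ^n_S(x) + ∑_{K ⊆ [d]∖S, m < |S|+|K| ≤ n} c_{m-|S|,|K|} · Φ^n_{S∪K}(x)`,
where `c_{j,ℓ} = ∑_{k=0}^{j} binom(ℓ,k) · B_k/(1+ℓ-k)`. -/
theorem nShapley_order_relation (d : ℕ) (hd : 1 ≤ d)
    (v : (Fin d → ℝ) → Finset (Fin d) → ℝ) (x : Fin d → ℝ)
    (m n : ℕ) (hm : 1 ≤ m) (hmn : m ≤ n) (hnd : n ≤ d)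
    (S : Finset (Fin d)) (hS : S.Nonempty) (hSm : S.card ≤ m)
    (c : ℕ → ℕ → ℝ)
    (hc : ∀ j ℓ : ℕ,
      c j ℓ = ∑ k ∈ Finset.range (j + 1),
        (ℓ.choose k : ℝ) * (bernoulli k : ℝ) / (1 + (ℓ : ℝ) - (k : ℝ))) :
    nShapley d v m x S =
      nShapley d v n x S +
        ∑ K ∈ Sᶜ.powerset.filter (fun K => m < S.card + K.card ∧ S.card + K.card ≤ n),
          c (m - S.card) K.card * nShapley d v n x (S ∪ K) :=
  nShapley_order_relation_general d v x m n hmn S hSm c hc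
end

section
/- Higher-order Shapley-GAM components of a GAM of order n vanish under the interventional value function: let μ be a probability measure on ℝ^d, let f : ℝ^d → ℝ be a generalized additive model of order n given by f(y) = ∑_{T ⊆ [d], |T| ≤ n} g_T(y) with each g_T bounded, measurable, and depending only on the coordinates of y in T, and let v(x,S) = ∫ f(P_S(x,z)) dμ(z) be the interventional value function. Then for every x ∈ ℝ^d and every T ⊆ [d] with |T| > n, ∑_{L ⊆ T} (−1)^{|T|−|L|} · v(x, L) = 0. -/
/-!
Both the interventional value function and the alternating sum over `L ⊆ T` are linear in `f`,
so it suffices to treat a single component `g_U` with `|U| ≤ n < |T|`. Such a `U` misses some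
`j ∈ T`, and since `g_U` ignores coordinate `j`, `v(g_U, x, L ∪ {j}) = v(g_U, x, L)`; the terms of
the alternating sum then cancel in pairs `L`, `L ∪ {j}`.
-/

open Finset MeasureTheory

/-- `interventionalValue d μ f x S = ∫ f(P_S(x,z)) dμ(z)`, where `P_S(x,z)` agrees
with `x` on `S` and with `z` outside of `S` (interventional SHAP). -/
noncomputable def interventionalValue (d : ℕ) (μ : Measure (Fin d → ℝ))
    (f : (Fin d → ℝ) → ℝ) (x : Fin d → ℝ) (S : Finset (Fin d)) : ℝ :=
  ∫ z, f (fun i => if i ∈ S then x i else z i) ∂μ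

theorem Finset.sum_powerset_neg_one_pow_mul_eq_zero {α R : Type*} [DecidableEq α] [CommRing R]
    {φ : Finset α → R} {T : Finset α} {j : α} (hj : j ∈ T)
    (hφ : ∀ L, φ (insert j L) = φ L) :
    ∑ L ∈ T.powerset, (-1 : R) ^ (T.card - L.card) * φ L = 0 := by
  rw [← insert_erase hj, sum_powerset_insert (notMem_erase j T), ← sum_add_distrib]
  refine sum_eq_zero fun L hL => ?_
  have hLsub : L ⊆ T.erase j := mem_powerset.mp hL
  have hjL : j ∉ L := fun h => notMem_erase j T (hLsub h)
  have hLcard : L.card < T.card := by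
    rw [← card_erase_add_one hj]; exact Nat.lt_succ_of_le (card_le_card hLsub)
  have hsign : T.card - L.card = T.card - (L.card + 1) + 1 := by omega
  rw [insert_erase hj, hφ, card_insert_of_notMem hjL, hsign, pow_succ]
  ring

section interventionalValue

variable {d : ℕ} {μ : Measure (Fin d → ℝ)}

theorem interventionalValue_insert_of_notMem {g : (Fin d → ℝ) → ℝ} {U : Finset (Fin d)}
    (hg : ∀ y z : Fin d → ℝ, (∀ i ∈ U, y i = z i) → g y = g z) {j : Fin d} (hj : j ∉ U)
    (x : Fin d → ℝ) (S : Finset (Fin d)) :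
    interventionalValue d μ g x (insert j S) = interventionalValue d μ g x S := by
  refine integral_congr_ae (Filter.Eventually.of_forall fun z => hg _ _ fun i hi => ?_)
  have hij : i ≠ j := ne_of_mem_of_not_mem hi hj
  simp [hij]

theorem sum_powerset_neg_one_pow_mul_interventionalValue_eq_zero {g : (Fin d → ℝ) → ℝ}
    {U : Finset (Fin d)} (hg : ∀ y z : Fin d → ℝ, (∀ i ∈ U, y i = z i) → g y = g z)
    (x : Fin d → ℝ) {T : Finset (Fin d)} (hTU : ¬ T ⊆ U) :
    ∑ L ∈ T.powerset, (-1 : ℝ) ^ (T.card - L.card) * interventionalValue d μ g x L = 0 := by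
  obtain ⟨j, hjT, hjU⟩ := not_subset.mp hTU
  exact sum_powerset_neg_one_pow_mul_eq_zero hjT (interventionalValue_insert_of_notMem hg hjU x)

theorem integrable_comp_piecewise [IsFiniteMeasure μ] {g : (Fin d → ℝ) → ℝ}
    (hg : Measurable g) {C : ℝ} (hC : ∀ y, |g y| ≤ C) (x : Fin d → ℝ) (S : Finset (Fin d)) :
    Integrable (fun z => g (fun i => if i ∈ S then x i else z i)) μ := by
  have hP : Measurable fun z : Fin d → ℝ => fun i => if i ∈ S then x i else z i :=
    measurable_pi_lambda _ fun i => by split_ifs <;> fun_prop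
  exact .of_bound (hg.comp hP).aestronglyMeasurable C (.of_forall fun z => hC _)

theorem interventionalValue_finsetSum {ι : Type*} {s : Finset ι}
    {g : ι → (Fin d → ℝ) → ℝ} {x : Fin d → ℝ} {S : Finset (Fin d)}
    (hg : ∀ t ∈ s, Integrable (fun z => g t (fun i => if i ∈ S then x i else z i)) μ) :
    interventionalValue d μ (fun y => ∑ t ∈ s, g t y) x S =
      ∑ t ∈ s, interventionalValue d μ (g t) x S :=
  integral_finsetSum s hg

end interventionalValue

theorem gam_moebius_vanishes_general (d : ℕ) (n : ℕ)
    (μ : Measure (Fin d → ℝ)) [IsProbabilityMeasure μ]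
    (f : (Fin d → ℝ) → ℝ) (g : Finset (Fin d) → (Fin d → ℝ) → ℝ)
    (hgmeas : ∀ T : Finset (Fin d), Measurable (g T))
    (hgbdd : ∀ T : Finset (Fin d), ∃ C : ℝ, ∀ y : Fin d → ℝ, |g T y| ≤ C)
    (hgdep : ∀ (T : Finset (Fin d)) (y z : Fin d → ℝ),
      (∀ i ∈ T, y i = z i) → g T y = g T z)
    (hf : ∀ y : Fin d → ℝ,
      f y = ∑ T ∈ Finset.univ.filter (fun T : Finset (Fin d) => T.card ≤ n), g T y)
    (x : Fin d → ℝ) (T : Finset (Fin d)) (hT : n < T.card) :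
    ∑ L ∈ T.powerset,
      (-1 : ℝ) ^ (T.card - L.card) * interventionalValue d μ f x L = 0 := by
  have hv : ∀ L, interventionalValue d μ f x L =
      ∑ U ∈ univ.filter (fun U : Finset (Fin d) => U.card ≤ n), interventionalValue d μ (g U) x L :=
    fun L => by
      rw [funext hf]
      refine interventionalValue_finsetSum fun U _ => ?_
      obtain ⟨C, hC⟩ := hgbdd U
      exact integrable_comp_piecewise (hgmeas U) hC x L
  simp_rw [hv, mul_sum]
  rw [sum_comm]
  refine sum_eq_zero fun U hU => sum_powerset_neg_one_pow_mul_interventionalValue_eq_zero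
    (hgdep U) x fun hTU => ?_
  have hU_card : U.card ≤ n := (mem_filter.mp hU).2
  exact absurd (card_le_card hTU) (by omega)

/-- Higher-order Shapley-GAM components of a GAM of order `n` vanish under the
interventional value function: if `f(y) = ∑_{T ⊆ [d], |T| ≤ n} g_T(y)` with each
`g_T` bounded, measurable, and depending only on the coordinates in `T`, and
`v(x,S) = ∫ f(P_S(x,z)) dμ(z)` for a probability measure `μ`, then for every `x`
and every `T ⊆ [d]` with `|T| > n`,
`∑_{L ⊆ T} (-1)^{|T|-|L|} · v(x, L) = 0`. -/
theorem gam_moebius_vanishes (d : ℕ) (hd : 1 ≤ d) (n : ℕ)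
    (μ : Measure (Fin d → ℝ)) [IsProbabilityMeasure μ]
    (f : (Fin d → ℝ) → ℝ) (g : Finset (Fin d) → (Fin d → ℝ) → ℝ)
    (hgmeas : ∀ T : Finset (Fin d), Measurable (g T))
    (hgbdd : ∀ T : Finset (Fin d), ∃ C : ℝ, ∀ y : Fin d → ℝ, |g T y| ≤ C)
    (hgdep : ∀ (T : Finset (Fin d)) (y z : Fin d → ℝ),
      (∀ i ∈ T, y i = z i) → g T y = g T z)
    (hf : ∀ y : Fin d → ℝ,
      f y = ∑ T ∈ Finset.univ.filter (fun T : Finset (Fin d) => T.card ≤ n), g T y)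
    (x : Fin d → ℝ) (T : Finset (Fin d)) (hT : n < T.card) :
    ∑ L ∈ T.powerset,
      (-1 : ℝ) ^ (T.card - L.card) * interventionalValue d μ f x L = 0 :=
  gam_moebius_vanishes_general d n μ f g hgmeas hgbdd hgdep hf x T hT
end
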